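/- arXiv:2204.04774 — 7 statements merged into one kernel-verified Lean document; each statement's English description precedes it below -/
import Mathlib

section
/- The set K_exp := closure{(a₁,a₂,a₃) ∈ ℝ³ : a₃ ≤ a₂ · ln(a₁/a₂), a₁ > 0, a₂ > 0} equals the union of {(a₁,a₂,a₃) : a₃ ≤ a₂·ln(a₁/a₂), a₁ > 0, a₂ > 0} and {(a₁,0,a₃) : a₁ ≥ 0, a₃ ≤ 0}. -/
open Real Filter Topology

/-! The inequality `z ≤ y log (x / y)` is the perspective of the concave function `log`.
Replacing `log` by its tangent lines `log c + t / c - 1` shows that the set lies in the closed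
intersection of the half-spaces `z ≤ y (log c - 1) + x / c`, `c > 0`, within the quadrant
`x, y ≥ 0`. Conversely, a point of this intersection lies in the set itself or, when `y = 0`,
has `z ≤ 0`; and every such point `(x, 0, z)` is the limit of `(x + t, t, z)` as `t → 0⁺`. -/

def expConeCore : Set (ℝ × ℝ × ℝ) :=
  {p | p.2.2 ≤ p.2.1 * log (p.1 / p.2.1) ∧ 0 < p.1 ∧ 0 < p.2.1}

def expConeEdge : Set (ℝ × ℝ × ℝ) := {p | p.2.1 = 0 ∧ 0 ≤ p.1 ∧ p.2.2 ≤ 0}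

def expConeHalfspaces : Set (ℝ × ℝ × ℝ) :=
  {p | 0 ≤ p.1 ∧ 0 ≤ p.2.1 ∧ ∀ c > 0, p.2.2 ≤ p.2.1 * (log c - 1) + p.1 / c}

theorem log_le_log_add_div_sub_one {t c : ℝ} (ht : 0 < t) (hc : 0 < c) :
    log t ≤ log c + t / c - 1 := by
  have := log_le_sub_one_of_pos (div_pos ht hc)
  rw [log_div ht.ne' hc.ne'] at this
  linarith

theorem isClosed_expConeHalfspaces : IsClosed expConeHalfspaces := by
  simp only [expConeHalfspaces, Set.ofPred_and, Set.ofPred_forall]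
  exact (isClosed_le continuous_const continuous_fst).inter <|
    (isClosed_le continuous_const continuous_snd.fst).inter <|
    isClosed_iInter fun c => isClosed_iInter fun _ => isClosed_le (by fun_prop) (by fun_prop)

theorem expConeCore_subset_halfspaces : expConeCore ⊆ expConeHalfspaces := by
  rintro ⟨x, y, z⟩ ⟨hz, hx, hy⟩
  refine ⟨hx.le, hy.le, fun c hc => ?_⟩
  have := log_le_log_add_div_sub_one (div_pos hx hy) hc
  calc z ≤ y * log (x / y) := hz
    _ ≤ y * (log c + x / y / c - 1) := by gcongr
    _ = y * (log c - 1) + x / c := by field_simp; ring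

theorem expConeHalfspaces_subset : expConeHalfspaces ⊆ expConeCore ∪ expConeEdge := by
  rintro ⟨x, y, z⟩ ⟨hx, hy, hc⟩
  rcases hy.eq_or_lt with rfl | hy
  · refine Or.inr ⟨rfl, hx, not_lt.1 fun hz => ?_⟩
    have := hc ((x + 1) / z) (by positivity)
    rw [zero_mul, zero_add, div_div_eq_mul_div, le_div_iff₀ (by positivity)] at this
    nlinarith
  rcases hx.eq_or_lt with rfl | hx
  · have := hc (exp (z / y)) (exp_pos _)
    rw [log_exp, zero_div, add_zero, mul_sub, mul_div_cancel₀ _ hy.ne'] at this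
    linarith
  · refine Or.inl ⟨?_, hx, hy⟩
    have := hc (x / y) (div_pos hx hy)
    rwa [div_div_cancel₀ hx.ne', mul_sub, mul_one, sub_add_cancel] at this

theorem expConeEdge_subset_closure : expConeEdge ⊆ closure expConeCore := by
  rintro ⟨x, y, z⟩ ⟨rfl, hx, hz⟩
  refine mem_closure_of_tendsto (f := fun t => (x + t, t, z)) (b := 𝓝[>] 0) ?_ ?_
  · exact (Continuous.tendsto' (by fun_prop) 0 _ (by simp)).mono_left nhdsWithin_le_nhds
  · filter_upwards [self_mem_nhdsWithin] with t (ht : 0 < t)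
    refine ⟨hz.trans (mul_nonneg ht.le (log_nonneg ?_)), by positivity, ht⟩
    rw [le_div_iff₀ ht]
    linarith

/-- The closure of `{(a₁,a₂,a₃) : a₃ ≤ a₂ ln(a₁/a₂), a₁ > 0, a₂ > 0}` equals the union of
that set with `{(a₁,0,a₃) : a₁ ≥ 0, a₃ ≤ 0}`. -/
theorem Kexp_closure_eq :
    closure {p : ℝ × ℝ × ℝ | p.2.2 ≤ p.2.1 * Real.log (p.1 / p.2.1) ∧ 0 < p.1 ∧ 0 < p.2.1} =
      {p : ℝ × ℝ × ℝ | p.2.2 ≤ p.2.1 * Real.log (p.1 / p.2.1) ∧ 0 < p.1 ∧ 0 < p.2.1} ∪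
      {p : ℝ × ℝ × ℝ | p.2.1 = 0 ∧ 0 ≤ p.1 ∧ p.2.2 ≤ 0} := by
  change closure expConeCore = expConeCore ∪ expConeEdge
  refine Set.Subset.antisymm ?_ (Set.union_subset subset_closure expConeEdge_subset_closure)
  calc closure expConeCore
      ⊆ expConeHalfspaces :=
        closure_minimal expConeCore_subset_halfspaces isClosed_expConeHalfspaces
    _ ⊆ expConeCore ∪ expConeEdge := expConeHalfspaces_subset
end

section
/- Fix β > 0, α ∈ ℝ, bounds x̲ ≤ x̄, and v > 0. For every x ∈ [x̲, x̄], the point (d, u) = (exp(α−βx)·v, x·exp(α−βx)·v) satisfies the exponential-cone condition d·ln(d/v) = α·d − β·u; conversely, if (v, d, u) satisfies v > 0, d > 0, d·ln(d/v) ≤ α·d − β·u, and x̲·d ≤ u ≤ x̄·d, then x := u/d lies in [x̲, x̄] and d ≤ exp(α − β·x)·v. -/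
/-- Variable-change equivalence for a single product: for `x ∈ [x̲, x̄]`, setting
`d = exp(α - βx)·v` and `u = x·d` satisfies `d·ln(d/v) = α·d - β·u`; conversely, if
`v > 0`, `d > 0`, `d·ln(d/v) ≤ α·d - β·u` and `x̲·d ≤ u ≤ x̄·d`, then `x := u/d`
lies in `[x̲, x̄]` and `d ≤ exp(α - β·x)·v`. -/
theorem price_conic_change_of_variables (α β xlo xhi v : ℝ)
    (hβ : 0 < β) (hbox : xlo ≤ xhi) (hv : 0 < v) :
    (∀ x ∈ Set.Icc xlo xhi,
      (Real.exp (α - β * x) * v) * Real.log ((Real.exp (α - β * x) * v) / v) =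
        α * (Real.exp (α - β * x) * v) - β * (x * (Real.exp (α - β * x) * v))) ∧
    (∀ d u : ℝ, 0 < d →
      d * Real.log (d / v) ≤ α * d - β * u →
      xlo * d ≤ u → u ≤ xhi * d →
      u / d ∈ Set.Icc xlo xhi ∧ d ≤ Real.exp (α - β * (u / d)) * v) := by
  constructor
  · intro x _
    have h : (Real.exp (α - β * x) * v) / v = Real.exp (α - β * x) := by
      field_simp
    rw [h, Real.log_exp]
    ring
  · intro d u hd hcone hlo hhi
    have hmem : u / d ∈ Set.Icc xlo xhi := by
      constructor
      · rw [le_div_iff₀ hd]; linarith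
      · rw [div_le_iff₀ hd]; linarith
    refine ⟨hmem, ?_⟩
    have hlog : Real.log (d / v) ≤ α - β * (u / d) := by
      have h1 : d * Real.log (d / v) ≤ d * (α - β * (u / d)) := by
        have : d * (α - β * (u / d)) = α * d - β * u := by
          field_simp
        rw [this]; exact hcone
      exact le_of_mul_le_mul_left h1 hd
    have := Real.exp_le_exp.mpr hlog
    rw [Real.exp_log (div_pos hd hv)] at this
    calc d = (d / v) * v := by field_simp
    _ ≤ Real.exp (α - β * (u / d)) * v := by
      exact mul_le_mul_of_nonneg_right this hv.le
end

section
/- Let (v, d, u) ∈ ℝ^J × ℝ^J × ℝ^J satisfy: for each j, (v_j, d_j, β_j u_j − α_j d_j) ∈ K_exp and x̲_j d_j ≤ u_j ≤ x̄_j d_j, with β_j > 0 and v_j ≥ 0. Define x_j = x̲_j if d_j = 0 and x_j = u_j/d_j otherwise. Then for each j, x̲_j ≤ x_j ≤ x̄_j, 0 ≤ d_j ≤ exp(α_j − β_j x_j)·v_j, and u_j − ψ_j d_j = (x_j − ψ_j)·d_j. -/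
/-- The exponential cone in ℝ³. -/
def Kexp : Set (ℝ × ℝ × ℝ) :=
  closure {p : ℝ × ℝ × ℝ | p.2.2 ≤ p.2.1 * Real.log (p.1 / p.2.1) ∧ 0 < p.1 ∧ 0 < p.2.1}

lemma kexp_bounds {a b c : ℝ} (h : (a, b, c) ∈ Kexp) :
    0 ≤ a ∧ 0 ≤ b ∧ ∀ l > 0, c ≤ b * (Real.log l - 1) + a / l := by
  have hmem : (a, b, c) ∈ {p : ℝ × ℝ × ℝ | 0 ≤ p.1 ∧ 0 ≤ p.2.1 ∧
      ∀ l > 0, p.2.2 ≤ p.2.1 * (Real.log l - 1) + p.1 / l} := by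
    refine closure_minimal ?_ ?_ h
    · rintro ⟨a, b, c⟩ ⟨hc, ha, hb⟩
      refine ⟨ha.le, hb.le, fun l hl => ?_⟩
      have h1 : Real.log ((a / b) / l) ≤ (a / b) / l - 1 :=
        Real.log_le_sub_one_of_pos (by positivity)
      have h2 : Real.log ((a / b) / l) = Real.log (a / b) - Real.log l :=
        Real.log_div (by positivity) (ne_of_gt hl)
      have h3 : Real.log (a / b) ≤ Real.log l + (a / b) / l - 1 := by linarith
      have h4 : b * Real.log (a / b) ≤ b * (Real.log l + (a / b) / l - 1) :=
        mul_le_mul_of_nonneg_left h3 hb.le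
      have h5 : b * ((a / b) / l) = a / l := by field_simp
      simp only [Set.mem_setOf_eq] at hc ⊢
      nlinarith [h4, h5]
    · have hrw : {p : ℝ × ℝ × ℝ | 0 ≤ p.1 ∧ 0 ≤ p.2.1 ∧
          ∀ l > 0, p.2.2 ≤ p.2.1 * (Real.log l - 1) + p.1 / l}
          = {p : ℝ × ℝ × ℝ | 0 ≤ p.1} ∩ ({p : ℝ × ℝ × ℝ | 0 ≤ p.2.1} ∩
            ⋂ l ∈ Set.Ioi (0:ℝ), {p : ℝ × ℝ × ℝ | p.2.2 ≤ p.2.1 * (Real.log l - 1) + p.1 / l}) := by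
        ext p
        simp [Set.mem_iInter, and_assoc]
      rw [hrw]
      refine (isClosed_le continuous_const continuous_fst).inter
        (IsClosed.inter (isClosed_le continuous_const (continuous_fst.comp continuous_snd))
          (isClosed_biInter fun l hl => isClosed_le (by fun_prop) (by fun_prop)))
  exact hmem

/-- From a feasible point of the conic reformulation (SP₃) to a feasible point of the
price-space problem (SP₂'') with the same objective: if `(v_j, d_j, β_j u_j - α_j d_j) ∈ K_exp`
and `x̲_j d_j ≤ u_j ≤ x̄_j d_j` for all j, with `β_j > 0`, `v_j ≥ 0`, then setting
`x_j = x̲_j` when `d_j = 0` and `x_j = u_j/d_j` otherwise, we get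
`x̲_j ≤ x_j ≤ x̄_j`, `0 ≤ d_j ≤ exp(α_j - β_j x_j)·v_j`, and
`u_j - ψ_j d_j = (x_j - ψ_j)·d_j`. -/
theorem conic_to_price_feasible {J : Type*} [Fintype J]
    (α β xlo xhi ψ v d u x : J → ℝ)
    (hβ : ∀ j, 0 < β j) (hbox : ∀ j, xlo j ≤ xhi j) (hv : ∀ j, 0 ≤ v j)
    (hcone : ∀ j, (v j, d j, β j * u j - α j * d j) ∈ Kexp)
    (hlo : ∀ j, xlo j * d j ≤ u j) (hhi : ∀ j, u j ≤ xhi j * d j)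
    (hx : ∀ j, x j = if d j = 0 then xlo j else u j / d j) :
    ∀ j, xlo j ≤ x j ∧ x j ≤ xhi j ∧
      0 ≤ d j ∧ d j ≤ Real.exp (α j - β j * x j) * v j ∧
      u j - ψ j * d j = (x j - ψ j) * d j := by
  intro j
  obtain ⟨hva, hda, hkey⟩ := kexp_bounds (hcone j)
  by_cases hd0 : d j = 0
  · have hu0 : u j = 0 := by
      have h1 := hlo j
      have h2 := hhi j
      rw [hd0] at h1 h2
      linarith
    have hxj : x j = xlo j := by rw [hx j, if_pos hd0]
    refine ⟨le_of_eq hxj.symm, hxj ▸ hbox j, le_of_eq hd0.symm, ?_, ?_⟩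
    · rw [hd0]; positivity
    · rw [hd0, hu0]; ring
  · have hd : 0 < d j := lt_of_le_of_ne hda (Ne.symm hd0)
    have hxj : x j = u j / d j := by rw [hx j, if_neg hd0]
    have hvpos : 0 < v j := by
      rcases lt_or_eq_of_le (hv j) with h | h
      · exact h
      · exfalso
        set c := β j * u j - α j * d j with hc
        have := hkey (Real.exp (c / d j)) (Real.exp_pos _)
        rw [Real.log_exp, ← h] at this
        have hdc : d j * (c / d j - 1) = c - d j := by field_simp
        rw [hdc] at this
        simp at this
        linarith
    refine ⟨?_, ?_, hda, ?_, ?_⟩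
    · rw [hxj, le_div_iff₀ hd]; exact hlo j
    · rw [hxj, div_le_iff₀ hd]; exact hhi j
    · have hkey2 := hkey (v j / d j) (by positivity)
      have h1 : v j / (v j / d j) = d j := by field_simp
      rw [h1, Real.log_div (ne_of_gt hvpos) hd0] at hkey2
      -- hkey2 : β u - α d ≤ d * (log v - log d - 1) + d
      have h2 : β j * u j - α j * d j ≤ d j * (Real.log (v j) - Real.log (d j)) := by
        nlinarith [hkey2]
      have h3 : Real.log (d j) + (β j * (u j / d j) - α j) ≤ Real.log (v j) := by
        have hex : d j * (Real.log (d j) + (β j * (u j / d j) - α j)) ≤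
            d j * Real.log (v j) := by
          have hmul : d j * (β j * (u j / d j)) = β j * u j := by field_simp
          nlinarith [h2, hmul]
        exact le_of_mul_le_mul_left (by linarith [hex]) hd
      have h4 : d j * Real.exp (β j * x j - α j) ≤ v j := by
        have := Real.exp_le_exp.mpr h3
        rw [Real.exp_add, Real.exp_log hd, Real.exp_log hvpos] at this
        rw [hxj]
        convert this using 2
      have h5 : Real.exp (α j - β j * x j) * (d j * Real.exp (β j * x j - α j)) ≤
          Real.exp (α j - β j * x j) * v j :=
        mul_le_mul_of_nonneg_left h4 (Real.exp_pos _).le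
      have h6 : Real.exp (α j - β j * x j) * (d j * Real.exp (β j * x j - α j)) = d j := by
        rw [mul_comm (d j), ← mul_assoc, ← Real.exp_add]
        simp
      linarith [h5, h6.symm.le]
    · rw [hxj]
      field_simp
end

section
/- Conversely, if (v, d, x) ∈ ℝ^J × ℝ^J × ℝ^J satisfies v_j ≥ 0, 0 ≤ d_j ≤ exp(α_j − β_j x_j)·v_j, and x̲_j ≤ x_j ≤ x̄_j for all j, then setting u_j = x_j · d_j yields (v_j, d_j, β_j u_j − α_j d_j) ∈ K_exp and x̲_j d_j ≤ u_j ≤ x̄_j d_j for all j, and ∑_j (u_j − ψ_j d_j) = ∑_j (x_j − ψ_j) d_j. -/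
lemma Kexp_boundary (v : ℝ) (hv : 0 ≤ v) : ((v, 0, 0) : ℝ × ℝ × ℝ) ∈ Kexp := by
  rw [Kexp, mem_closure_iff_seq_limit]
  refine ⟨fun n => (v + 1/(n+1), 1/(n+1), 0), fun n => ?_, ?_⟩
  · have ht : (0:ℝ) < 1/(n+1) := by positivity
    refine ⟨?_, by positivity, ht⟩
    have h1 : (1:ℝ) ≤ (v + 1/(n+1)) / (1/(n+1)) := by
      rw [le_div_iff₀ ht]; linarith
    have := Real.log_nonneg h1
    positivity
  · have h : Filter.Tendsto (fun n : ℕ => (1:ℝ)/(n+1)) Filter.atTop (nhds 0) :=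
      tendsto_one_div_add_atTop_nhds_zero_nat
    have h1 : Filter.Tendsto (fun n : ℕ => v + 1/(n+1)) Filter.atTop (nhds v) := by
      have hc : Filter.Tendsto (fun _ : ℕ => v) Filter.atTop (nhds v) := tendsto_const_nhds
      simpa using hc.add h
    rw [nhds_prod_eq, nhds_prod_eq]
    exact h1.prodMk (h.prodMk (tendsto_const_nhds :
      Filter.Tendsto (fun _ : ℕ => (0:ℝ)) Filter.atTop (nhds 0)))

/-- From a feasible point of the price-space problem (SP₂'') to a feasible point of the
conic reformulation (SP₃) with the same objective: if `v_j ≥ 0`,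
`0 ≤ d_j ≤ exp(α_j - β_j x_j)·v_j` and `x̲_j ≤ x_j ≤ x̄_j` for all j, then setting
`u_j = x_j·d_j` we get `(v_j, d_j, β_j u_j - α_j d_j) ∈ K_exp`,
`x̲_j d_j ≤ u_j ≤ x̄_j d_j`, and `∑_j (u_j - ψ_j d_j) = ∑_j (x_j - ψ_j) d_j`. -/
theorem price_to_conic_feasible {J : Type*} [Fintype J]
    (α β xlo xhi ψ v d x u : J → ℝ)
    (hβ : ∀ j, 0 < β j)
    (hv : ∀ j, 0 ≤ v j) (hd0 : ∀ j, 0 ≤ d j)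
    (hd : ∀ j, d j ≤ Real.exp (α j - β j * x j) * v j)
    (hxlo : ∀ j, xlo j ≤ x j) (hxhi : ∀ j, x j ≤ xhi j)
    (hu : ∀ j, u j = x j * d j) :
    (∀ j, (v j, d j, β j * u j - α j * d j) ∈ Kexp) ∧
    (∀ j, xlo j * d j ≤ u j ∧ u j ≤ xhi j * d j) ∧
    ∑ j, (u j - ψ j * d j) = ∑ j, (x j - ψ j) * d j := by
  refine ⟨fun j => ?_, fun j => ?_, ?_⟩
  · rcases eq_or_lt_of_le (hd0 j) with h0 | hdpos
    · have hz : β j * u j - α j * d j = 0 := by rw [hu j, ← h0]; ring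
      rw [hz, ← h0]
      exact Kexp_boundary (v j) (hv j)
    · -- d j > 0, so v j > 0
      have hvpos : 0 < v j := by
        by_contra h
        push_neg at h
        have : Real.exp (α j - β j * x j) * v j ≤ 0 :=
          mul_nonpos_of_nonneg_of_nonpos (Real.exp_nonneg _) h
        linarith [hd j]
      apply subset_closure
      refine ⟨?_, hvpos, hdpos⟩
      show β j * u j - α j * d j ≤ d j * Real.log (v j / d j)
      have hlog : α j - β j * x j + Real.log (v j) ≥ Real.log (d j) := by
        have := Real.log_le_log hdpos (hd j)
        rwa [Real.log_mul (Real.exp_ne_zero _) (ne_of_gt hvpos), Real.log_exp] at this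
      have : β j * x j - α j ≤ Real.log (v j / d j) := by
        rw [Real.log_div (ne_of_gt hvpos) (ne_of_gt hdpos)]
        linarith
      calc β j * u j - α j * d j = (β j * x j - α j) * d j := by rw [hu j]; ring
        _ ≤ Real.log (v j / d j) * d j := by
            exact mul_le_mul_of_nonneg_right this (le_of_lt hdpos)
        _ = d j * Real.log (v j / d j) := mul_comm _ _
  · rw [hu j]
    exact ⟨mul_le_mul_of_nonneg_right (hxlo j) (hd0 j),
      mul_le_mul_of_nonneg_right (hxhi j) (hd0 j)⟩
  · apply Finset.sum_congr rfl
    intro j _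
    rw [hu j]; ring
end

section
/- The dual cone of K_exp = closure{(a₁,a₂,a₃) : a₃ ≤ a₂·ln(a₁/a₂), a₁ > 0, a₂ > 0} is K_exp* = {(b₁,b₂,b₃) : b₁ ≥ −b₃·exp(b₂/b₃ − 1), b₁ > 0, b₃ < 0} ∪ {(b₁,b₂,0) : b₁ ≥ 0, b₂ ≥ 0}. -/
open Real

/-- Key pointwise inequality on the boundary ray. -/
lemma aux_key (b1 b2 b3 t : ℝ) (ht : 0 < t) (hb1 : 0 < b1) (hb3 : b3 < 0)
    (hlog : Real.log (-b3) + (b2 / b3 - 1) ≤ Real.log b1) :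
    0 ≤ t * b1 + b2 + Real.log t * b3 := by
  have hc : 0 < -b3 := neg_pos.mpr hb3
  have hx : 0 < b1 / (-b3) := by positivity
  have h1 : Real.log (t * (b1 / (-b3))) ≤ t * (b1 / (-b3)) - 1 :=
    Real.log_le_sub_one_of_pos (by positivity)
  rw [Real.log_mul ht.ne' hx.ne', Real.log_div hb1.ne' hc.ne'] at h1
  have hb2 : b2 / b3 * b3 = b2 := div_mul_cancel₀ _ hb3.ne
  have ht1 : t * (b1 / (-b3)) * (-b3) = t * b1 := by rw [mul_assoc, div_mul_cancel₀ _ hc.ne']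
  nlinarith [mul_le_mul_of_nonneg_right h1 hc.le,
    mul_le_mul_of_nonneg_right hlog hc.le]



/-- The dual cone of the exponential cone is
`{(b₁,b₂,b₃) : b₁ ≥ -b₃·exp(b₂/b₃ - 1), b₁ > 0, b₃ < 0} ∪ {(b₁,b₂,0) : b₁ ≥ 0, b₂ ≥ 0}`. -/
theorem Kexp_dual_cone :
    {b : ℝ × ℝ × ℝ | ∀ a ∈ Kexp, 0 ≤ a.1 * b.1 + a.2.1 * b.2.1 + a.2.2 * b.2.2} =
      {b : ℝ × ℝ × ℝ |
        -b.2.2 * Real.exp (b.2.1 / b.2.2 - 1) ≤ b.1 ∧ 0 < b.1 ∧ b.2.2 < 0} ∪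
      {b : ℝ × ℝ × ℝ | b.2.2 = 0 ∧ 0 ≤ b.1 ∧ 0 ≤ b.2.1} := by
  ext ⟨b1, b2, b3⟩
  simp only [Set.mem_setOf_eq, Set.mem_union]
  constructor
  · intro h
    have key : ∀ t : ℝ, 0 < t → 0 ≤ t * b1 + b2 + Real.log t * b3 := by
      intro t ht
      have hm : ((t, 1, Real.log t) : ℝ × ℝ × ℝ) ∈ Kexp := by
        apply subset_closure
        refine ⟨?_, ht, one_pos⟩
        simp
      simpa using h _ hm
    have key2 : ∀ c : ℝ, c ≤ 0 → 0 ≤ b1 + b2 + c * b3 := by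
      intro c hc
      have hm : ((1, 1, c) : ℝ × ℝ × ℝ) ∈ Kexp := by
        apply subset_closure
        refine ⟨?_, one_pos, one_pos⟩
        simpa using hc
      simpa using h _ hm
    have hb3 : b3 ≤ 0 := by
      by_contra hb3
      push_neg at hb3
      have hc : min 0 ((-1 - b1 - b2) / b3) ≤ 0 := min_le_left _ _
      have hk := key2 _ hc
      rcases min_cases (0 : ℝ) ((-1 - b1 - b2) / b3) with ⟨he, hle⟩ | ⟨he, hle⟩
      · rw [he] at hk
        have h1 : 0 ≤ (-1 - b1 - b2) / b3 * b3 := mul_nonneg hle hb3.le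
        rw [div_mul_cancel₀ _ hb3.ne'] at h1
        linarith
      · rw [he] at hk
        have : (-1 - b1 - b2) / b3 * b3 = -1 - b1 - b2 := div_mul_cancel₀ _ hb3.ne'
        linarith
    rcases hb3.lt_or_eq with hb3 | hb3
    · left
      have hb1 : 0 < b1 := by
        by_contra hb1
        push_neg at hb1
        have ht : (0:ℝ) < Real.exp ((-b2 - 1) / b3) := Real.exp_pos _
        have hk := key _ ht
        rw [Real.log_exp] at hk
        have h2 : (-b2 - 1) / b3 * b3 = -b2 - 1 := div_mul_cancel₀ _ hb3.ne
        nlinarith [mul_nonpos_of_nonneg_of_nonpos ht.le hb1]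
      refine ⟨?_, hb1, hb3⟩
      have htpos : (0:ℝ) < -b3 / b1 := div_pos (neg_pos.mpr hb3) hb1
      have hk := key _ htpos
      rw [Real.log_div (neg_pos.mpr hb3).ne' hb1.ne'] at hk
      have h1 : -b3 / b1 * b1 = -b3 := div_mul_cancel₀ _ hb1.ne'
      rw [h1] at hk
      have hlog : Real.log (-b3) + (b2 / b3 - 1) ≤ Real.log b1 := by
        have hb2 : b2 / b3 * b3 = b2 := div_mul_cancel₀ _ hb3.ne
        nlinarith [hk, neg_pos.mpr hb3]
      calc -b3 * Real.exp (b2 / b3 - 1)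
          = Real.exp (Real.log (-b3) + (b2 / b3 - 1)) := by
            rw [Real.exp_add, Real.exp_log (neg_pos.mpr hb3)]
        _ ≤ Real.exp (Real.log b1) := Real.exp_le_exp.mpr hlog
        _ = b1 := Real.exp_log hb1
    · right
      subst hb3
      refine ⟨rfl, ?_, ?_⟩
      · by_contra hb1
        push_neg at hb1
        have hb2 : 0 ≤ b2 := by
          by_contra hb2
          push_neg at hb2
          have hk := key 1 one_pos
          simp at hk
          linarith
        have ht : (0:ℝ) < (b2 + 1) / (-b1) := div_pos (by linarith) (by linarith)
        have hk := key _ ht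
        have h2 : (b2 + 1) / (-b1) * b1 = -(b2 + 1) := by
          rw [div_mul_eq_mul_div, div_eq_iff (neg_ne_zero.mpr (ne_of_lt hb1))]; ring
        nlinarith
      · by_contra hb2
        push_neg at hb2
        rcases le_or_gt b1 0 with hb1 | hb1
        · have hk := key 1 one_pos
          simp at hk
          linarith
        · have ht : (0:ℝ) < -b2 / (2 * b1) := div_pos (by linarith) (by linarith)
          have hk := key _ ht
          have h2 : -b2 / (2 * b1) * b1 = -b2 / 2 := by field_simp
          nlinarith
  · rintro (⟨hle, hb1, hb3⟩ | ⟨hb3, hb1, hb2⟩) <;> intro a ha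
    · have hclosed : IsClosed {a : ℝ × ℝ × ℝ | 0 ≤ a.1 * b1 + a.2.1 * b2 + a.2.2 * b3} :=
        isClosed_le continuous_const (by fun_prop)
      refine hclosed.closure_subset_iff.mpr ?_ ha
      rintro ⟨x, y, z⟩ ⟨hz, hx, hy⟩
      show 0 ≤ x * b1 + y * b2 + z * b3
      have hlog : Real.log (-b3) + (b2 / b3 - 1) ≤ Real.log b1 := by
        have := Real.log_le_log (mul_pos (neg_pos.mpr hb3) (Real.exp_pos _)) hle
        rwa [Real.log_mul (neg_pos.mpr hb3).ne' (Real.exp_ne_zero _), Real.log_exp] at this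
      have hk := aux_key b1 b2 b3 (x / y) (div_pos hx hy) hb1 hb3 hlog
      have hyx : y * (x / y) = x := by rw [mul_comm]; exact div_mul_cancel₀ x hy.ne'
      have hF1 := mul_le_mul_of_nonneg_left hk hy.le
      have h0 : y * (x / y * b1 + b2 + Real.log (x / y) * b3)
          = x * b1 + y * b2 + y * (Real.log (x / y) * b3) := by
        rw [mul_add, mul_add, ← mul_assoc, hyx]
      rw [h0, mul_zero] at hF1
      have hF2 : y * Real.log (x / y) * b3 ≤ z * b3 := mul_le_mul_of_nonpos_right hz hb3.le
      nlinarith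
    · have hclosed : IsClosed {a : ℝ × ℝ × ℝ | 0 ≤ a.1 * b1 + a.2.1 * b2 + a.2.2 * b3} :=
        isClosed_le continuous_const (by fun_prop)
      refine hclosed.closure_subset_iff.mpr ?_ ha
      rintro ⟨x, y, z⟩ ⟨hz, hx, hy⟩
      show 0 ≤ x * b1 + y * b2 + z * b3
      subst hb3
      nlinarith [mul_nonneg hx.le hb1, mul_nonneg hy.le hb2]
end

section
/- Let ρ ∈ ℝ^{J×J} with ρ ≥ 0 and ∑_{n≥1} ρⁿ convergent, θ ≥ 0. Suppose v and v^A solve balance equations v_j = θ_j + ∑_i (1 − a_i q_i) ρ_{ij} v_i (with a_i ∈ [0,1], q_i ∈ [0,1]) and v^A_j = θ_j + ∑_i (1 − 𝟙(i∈A) q_i) ρ_{ij} v^A_i, where A = {i : a_i v_i > 0}. If a_j v_j > v^A_j for every j ∈ A and A ≠ ∅, then v^A_j ≥ v_j for all j — contradicting a_j ≤ 1; hence min{a_j v_j / v^A_j : j ∈ A} ≤ 1. -/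
open Matrix

lemma my_pow_entry_nonneg {J : Type*} [Fintype J] [DecidableEq J]
    (M : Matrix J J ℝ) (hM : ∀ i j, 0 ≤ M i j) :
    ∀ n i j, 0 ≤ (M ^ n) i j := by
  intro n
  induction n with
  | zero => intro i j; simp [Matrix.one_apply]; positivity
  | succ n ih =>
    intro i j
    rw [pow_succ, Matrix.mul_apply]
    exact Finset.sum_nonneg fun k _ => mul_nonneg (ih i k) (hM k j)

lemma my_pow_entry_le {J : Type*} [Fintype J] [DecidableEq J]
    (M ρ : Matrix J J ℝ) (hM : ∀ i j, 0 ≤ M i j) (hle : ∀ i j, M i j ≤ ρ i j)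
    (hρ : ∀ i j, 0 ≤ ρ i j) :
    ∀ n i j, (M ^ n) i j ≤ (ρ ^ n) i j := by
  intro n
  induction n with
  | zero => intro i j; simp
  | succ n ih =>
    intro i j
    rw [pow_succ, pow_succ, Matrix.mul_apply, Matrix.mul_apply]
    refine Finset.sum_le_sum fun k _ => ?_
    exact mul_le_mul (ih i k) (hle k j) (hM k j) (my_pow_entry_nonneg ρ hρ n i k)

lemma my_comparison {J : Type*} [Fintype J] [DecidableEq J]
    (M : Matrix J J ℝ) (hM : ∀ i j, 0 ≤ M i j)
    (htend : ∀ i j, Filter.Tendsto (fun n : ℕ => (M ^ (n + 1)) i j)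
      Filter.atTop (nhds 0))
    (x : J → ℝ) (hx : ∀ j, ∑ i, M i j * x i ≤ x j) : ∀ j, 0 ≤ x j := by
  have key : ∀ n j, ∑ i, (M ^ (n + 1)) i j * x i ≤ x j := by
    intro n
    induction n with
    | zero => simpa using hx
    | succ n ih =>
      intro j
      have heq : ∑ i, (M ^ (n + 2)) i j * x i
          = ∑ k, M k j * ∑ i, (M ^ (n + 1)) i k * x i := by
        have hp : (M ^ (n + 2) : Matrix J J ℝ) = M ^ (n + 1) * M := by
          rw [pow_succ]
        rw [hp]
        simp_rw [Matrix.mul_apply, Finset.sum_mul, Finset.mul_sum]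
        rw [Finset.sum_comm]
        apply Finset.sum_congr rfl
        intro k _
        apply Finset.sum_congr rfl
        intro i _
        ring
      rw [heq]
      calc ∑ k, M k j * ∑ i, (M ^ (n + 1)) i k * x i
          ≤ ∑ k, M k j * x k :=
            Finset.sum_le_sum fun k _ => mul_le_mul_of_nonneg_left (ih k) (hM k j)
        _ ≤ x j := hx j
  intro j
  have h1 : Filter.Tendsto (fun n : ℕ => ∑ i, (M ^ (n + 1)) i j * x i)
      Filter.atTop (nhds 0) := by
    have := tendsto_finset_sum (Finset.univ : Finset J)
      (fun i _ => (htend i j).mul_const (x i))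
    simpa using this
  exact le_of_tendsto h1 (Filter.Eventually.of_forall fun n => key n j)

/-- The comparison argument showing `y^{A_k} ∈ [0,1]` in Algorithm 1: with `v` solving the
balance equations with purchase probabilities `a_i q_i` (`a_i, q_i ∈ [0,1]`) and `v^A`
solving the balance equations for the assortment `A = {i : a_i v_i > 0}`, if
`a_j v_j > v^A_j` for every `j ∈ A` then `v^A_j ≥ v_j` for all j — a contradiction with
`a_j ≤ 1`; hence there is `j ∈ A` with `a_j v_j ≤ v^A_j` (i.e. the minimum ratio is ≤ 1),
provided A is nonempty. -/
theorem algorithm_ratio_le_one {J : Type*} [Fintype J] [DecidableEq J]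
    (ρ : Matrix J J ℝ) (θ a q v vA : J → ℝ)
    (hρ : ∀ i j, 0 ≤ ρ i j) (hθ : ∀ j, 0 ≤ θ j)
    (hsum : ∀ i j, Summable fun n : ℕ => (ρ ^ (n + 1)) i j)
    (ha : ∀ i, a i ∈ Set.Icc (0 : ℝ) 1) (hq : ∀ i, q i ∈ Set.Icc (0 : ℝ) 1)
    (hbal : ∀ j, v j = θ j + ∑ i, (1 - a i * q i) * ρ i j * v i)
    (hbalA : ∀ j, vA j =
      θ j + ∑ i, (1 - (if 0 < a i * v i then q i else 0)) * ρ i j * vA i)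
    (hA : ∃ i, 0 < a i * v i) :
    ((∀ j, 0 < a j * v j → vA j < a j * v j) → ∀ j, v j ≤ vA j) ∧
    ∃ j, 0 < a j * v j ∧ a j * v j ≤ vA j := by
  classical
  -- generic: any matrix with nonneg entries ≤ ρ has powers tending to 0
  have tend_of_le : ∀ M : Matrix J J ℝ, (∀ i j, 0 ≤ M i j) → (∀ i j, M i j ≤ ρ i j) →
      ∀ i j, Filter.Tendsto (fun n : ℕ => (M ^ (n + 1)) i j) Filter.atTop (nhds 0) := by
    intro M hM hle i j
    have hsummable : Summable fun n : ℕ => (M ^ (n + 1)) i j := by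
      refine Summable.of_nonneg_of_le (fun n => my_pow_entry_nonneg M hM (n + 1) i j)
        (fun n => my_pow_entry_le M ρ hM hle hρ (n + 1) i j) (hsum i j)
    exact hsummable.tendsto_atTop_zero
  -- the assortment matrix
  set MA : Matrix J J ℝ :=
    fun i j => (1 - (if 0 < a i * v i then q i else 0)) * ρ i j with hMA
  have hcoefA : ∀ i, (1 - (if 0 < a i * v i then q i else 0)) ∈ Set.Icc (0 : ℝ) 1 := by
    intro i
    rcases hq i with ⟨hq0, hq1⟩
    constructor <;> split <;> linarith
  have hMAnn : ∀ i j, 0 ≤ MA i j := fun i j =>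
    mul_nonneg (hcoefA i).1 (hρ i j)
  have hMAle : ∀ i j, MA i j ≤ ρ i j := by
    intro i j
    calc MA i j ≤ 1 * ρ i j :=
      mul_le_mul_of_nonneg_right (hcoefA i).2 (hρ i j)
    _ = ρ i j := one_mul _
  -- vA is nonnegative
  have hvAnn : ∀ j, 0 ≤ vA j := by
    apply my_comparison MA hMAnn (tend_of_le MA hMAnn hMAle)
    intro j
    rw [hbalA j]
    have : ∑ i, MA i j * vA i = ∑ i, (1 - (if 0 < a i * v i then q i else 0)) * ρ i j * vA i := by
      apply Finset.sum_congr rfl; intro i _; rw [hMA]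
    rw [this]
    linarith [hθ j]
  -- Part 1
  have part1 : (∀ j, 0 < a j * v j → vA j < a j * v j) → ∀ j, v j ≤ vA j := by
    intro H
    set M : Matrix J J ℝ :=
      fun i j => (if 0 < a i * v i then 1 else 1 - a i * q i) * ρ i j with hM
    have hcoef : ∀ i, (if 0 < a i * v i then (1:ℝ) else 1 - a i * q i) ∈ Set.Icc (0:ℝ) 1 := by
      intro i
      rcases ha i with ⟨ha0, ha1⟩
      rcases hq i with ⟨hq0, hq1⟩
      have h1 : 0 ≤ a i * q i := mul_nonneg ha0 hq0
      have h2 : a i * q i ≤ 1 := mul_le_one₀ ha1 hq0 hq1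
      constructor <;> split <;> linarith
    have hMnn : ∀ i j, 0 ≤ M i j := fun i j => mul_nonneg (hcoef i).1 (hρ i j)
    have hMle : ∀ i j, M i j ≤ ρ i j := by
      intro i j
      calc M i j ≤ 1 * ρ i j := mul_le_mul_of_nonneg_right (hcoef i).2 (hρ i j)
      _ = ρ i j := one_mul _
    have hd : ∀ j, 0 ≤ vA j - v j := by
      apply my_comparison M hMnn (tend_of_le M hMnn hMle)
      intro j
      have hsub : vA j - v j = ∑ i,
          ((1 - (if 0 < a i * v i then q i else 0)) * ρ i j * vA i
            - (1 - a i * q i) * ρ i j * v i) := by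
        rw [hbal j, hbalA j, Finset.sum_sub_distrib]; ring
      rw [hsub]
      refine Finset.sum_le_sum fun i _ => ?_
      rcases hq i with ⟨hq0, hq1⟩
      by_cases hi : 0 < a i * v i
      · have hH := H i hi
        simp only [hM, hi, if_pos]
        have : ρ i j * (q i * (a i * v i - vA i)) ≥ 0 :=
          mul_nonneg (hρ i j) (mul_nonneg hq0 (by linarith))
        nlinarith [this]
      · simp only [hM, hi, if_neg, not_false_iff]
        have h1 : 0 ≤ ρ i j * (a i * q i * vA i) :=
          mul_nonneg (hρ i j) (mul_nonneg (mul_nonneg (ha i).1 hq0) (hvAnn i))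
        nlinarith [h1]
    intro j
    linarith [hd j]
  refine ⟨part1, ?_⟩
  by_contra hcon
  push_neg at hcon
  have H : ∀ j, 0 < a j * v j → vA j < a j * v j := fun j hj => hcon j hj
  have hle := part1 H
  obtain ⟨i, hi⟩ := hA
  have hv : 0 < v i := by
    rcases ha i with ⟨ha0, ha1⟩
    by_contra hv
    push_neg at hv
    nlinarith
  have h1 : a i * v i ≤ v i := mul_le_of_le_one_left hv.le (ha i).2
  have h2 := H i hi
  linarith [hle i]
end

section
/- Let d, v : [0,1] → ℝ be integrable with d(t) ≥ 0, v(t) > 0, and suppose for each t, d(t) ≤ exp(α − β x(t))·v(t) with x(t) ∈ [x̲, x̄] and β > 0. Define D = ∫₀¹ d, V = ∫₀¹ v, and x* = α/β − (1/β)·ln(D/V) (when D > 0). Then x* ∈ [x̲, x̄], D = exp(α − β x*)·V, and ∫₀¹ x(t) d(t) dt ≤ x*·D, i.e., the constant price x* extracts at least as much revenue from the aggregate demand. -/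
/-!
Write `c = D / V` and `L = log c`. Pointwise, `log y ≥ 1 - 1/y` at `y = d / (c v)` gives
`d log (d / v) ≥ d L + d - c v`; integrating, and using `∫ (d - c v) = D - c V = 0`, yields the
integral log-sum inequality `∫ d log (d / v) ≥ D L`. Since `d log (d / v) = α d - β x d`, this is
exactly `β ∫ x d ≤ (α - L) D = β x* D`. The bounds on the price path squeeze `D / V` between
`exp (α - β x̄)` and `exp (α - β x̲)`, which places `x*` in `[x̲, x̄]`.
-/

open MeasureTheory Real Set

lemma mul_log_add_sub_le_mul_log_div {a b c : ℝ} (ha : 0 ≤ a) (hb : 0 < b) (hc : 0 < c) :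
    a * log c + (a - c * b) ≤ a * log (a / b) := by
  rcases ha.eq_or_lt with rfl | ha
  · simp only [zero_mul, zero_sub, zero_add, neg_nonpos]
    positivity
  have hratio : 1 - (a / (c * b))⁻¹ ≤ log (a / (c * b)) :=
    one_sub_inv_le_log_of_pos (by positivity)
  have hlog : log (a / (c * b)) = log (a / b) - log c := by
    rw [div_mul_eq_div_div_swap, log_div (by positivity) hc.ne']
  calc a * log c + (a - c * b) = a * log c + a * (1 - (a / (c * b))⁻¹) := by
        field_simp
    _ ≤ a * log c + a * log (a / (c * b)) := by gcongr
    _ = a * log (a / b) := by rw [hlog]; ring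

section Integral

variable {ι : Type*} [MeasurableSpace ι] {μ : Measure ι} {f g : ι → ℝ}

theorem integral_mul_log_integral_div_le (hf : Integrable f μ) (hg : Integrable g μ)
    (hfg : Integrable (fun t => f t * log (f t / g t)) μ)
    (hf0 : ∀ᵐ t ∂μ, 0 ≤ f t) (hg0 : ∀ᵐ t ∂μ, 0 < g t)
    (hF : 0 < ∫ t, f t ∂μ) (hG : 0 < ∫ t, g t ∂μ) :
    (∫ t, f t ∂μ) * log ((∫ t, f t ∂μ) / ∫ t, g t ∂μ) ≤ ∫ t, f t * log (f t / g t) ∂μ := by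
  set c := (∫ t, f t ∂μ) / ∫ t, g t ∂μ
  have hc : 0 < c := div_pos hF hG
  have hpoint : ∀ᵐ t ∂μ, f t * log c + (f t - c * g t) ≤ f t * log (f t / g t) := by
    filter_upwards [hf0, hg0] with t hft hgt
    exact mul_log_add_sub_le_mul_log_div hft hgt hc
  have hdiff : Integrable (fun t => f t - c * g t) μ := hf.sub (hg.const_mul c)
  calc (∫ t, f t ∂μ) * log c = ∫ t, f t * log c + (f t - c * g t) ∂μ := by
        rw [integral_add (hf.mul_const _) hdiff,
          integral_sub hf (hg.const_mul c), integral_mul_const, integral_const_mul,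
          div_mul_cancel₀ _ hG.ne', sub_self, add_zero]
    _ ≤ ∫ t, f t * log (f t / g t) ∂μ := integral_mono_ae ((hf.mul_const _).add hdiff) hfg hpoint

theorem integral_mem_Icc_of_eq_exp_mul {y : ι → ℝ} {a b : ℝ} (hf : Integrable f μ)
    (hg : Integrable g μ) (hg0 : ∀ᵐ t ∂μ, 0 ≤ g t) (hfy : ∀ᵐ t ∂μ, f t = exp (y t) * g t)
    (hy : ∀ᵐ t ∂μ, y t ∈ Icc a b) :
    ∫ t, f t ∂μ ∈ Icc (exp a * ∫ t, g t ∂μ) (exp b * ∫ t, g t ∂μ) := by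
  rw [← integral_const_mul, ← integral_const_mul]
  constructor
  · refine integral_mono_ae (hg.const_mul _) hf ?_
    filter_upwards [hg0, hfy, hy] with t hgt hft hyt
    rw [hft]
    gcongr
    exact hyt.1
  · refine integral_mono_ae hf (hg.const_mul _) ?_
    filter_upwards [hg0, hfy, hy] with t hgt hft hyt
    rw [hft]
    gcongr
    exact hyt.2

theorem mul_integral_mul_le_of_eq_exp_mul {x : ι → ℝ} {α β : ℝ} (hf : Integrable f μ)
    (hg : Integrable g μ) (hxf : Integrable (fun t => x t * f t) μ) (hf0 : ∀ᵐ t ∂μ, 0 ≤ f t)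
    (hg0 : ∀ᵐ t ∂μ, 0 < g t) (hfx : ∀ᵐ t ∂μ, f t = exp (α - β * x t) * g t)
    (hF : 0 < ∫ t, f t ∂μ) (hG : 0 < ∫ t, g t ∂μ) :
    β * ∫ t, x t * f t ∂μ ≤ (α - log ((∫ t, f t ∂μ) / ∫ t, g t ∂μ)) * ∫ t, f t ∂μ := by
  have hentropy : (fun t => f t * log (f t / g t)) =ᵐ[μ] fun t => α * f t - β * (x t * f t) := by
    filter_upwards [hg0, hfx] with t hgt hft
    rw [hft, mul_div_assoc, div_self hgt.ne', mul_one, log_exp]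
    ring
  have hlogsum := integral_mul_log_integral_div_le hf hg
    (((hf.const_mul α).sub (hxf.const_mul β)).congr hentropy.symm) hf0 hg0 hF hG
  rw [integral_congr_ae hentropy, integral_sub (hf.const_mul α) (hxf.const_mul β),
    integral_const_mul, integral_const_mul] at hlogsum
  linarith

end Integral

theorem constant_price_optimal_general (α β xlo xhi : ℝ) (hβ : 0 < β)
    (d v x : ℝ → ℝ)
    (hd : IntegrableOn d (Set.Icc 0 1)) (hv : IntegrableOn v (Set.Icc 0 1))
    (hxd : IntegrableOn (fun t => x t * d t) (Set.Icc 0 1))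
    (hd0 : ∀ t ∈ Set.Icc (0 : ℝ) 1, 0 ≤ d t)
    (hv0 : ∀ t ∈ Set.Icc (0 : ℝ) 1, 0 < v t)
    (hx : ∀ t ∈ Set.Icc (0 : ℝ) 1, x t ∈ Set.Icc xlo xhi)
    (hdeq : ∀ t ∈ Set.Icc (0 : ℝ) 1, d t = Real.exp (α - β * x t) * v t)
    (D V : ℝ)
    (hD : D = ∫ t in Set.Icc (0 : ℝ) 1, d t)
    (hV : V = ∫ t in Set.Icc (0 : ℝ) 1, v t)
    (hDpos : 0 < D) :
    (α / β - (1 / β) * Real.log (D / V)) ∈ Set.Icc xlo xhi ∧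
    D = Real.exp (α - β * (α / β - (1 / β) * Real.log (D / V))) * V ∧
    (∫ t in Set.Icc (0 : ℝ) 1, x t * d t) ≤
      (α / β - (1 / β) * Real.log (D / V)) * D := by
  have hIcc {p : ℝ → Prop} (h : ∀ t ∈ Icc (0 : ℝ) 1, p t) :
      ∀ᵐ t ∂volume.restrict (Icc 0 1), p t :=
    ae_restrict_of_forall_mem measurableSet_Icc h
  have hbounds : D ∈ Icc (exp (α - β * xhi) * V) (exp (α - β * xlo) * V) := by
    rw [hD, hV]
    refine integral_mem_Icc_of_eq_exp_mul hd hv (hIcc fun t ht => (hv0 t ht).le) (hIcc hdeq)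
      (hIcc fun t ht => ⟨?_, ?_⟩)
    · exact sub_le_sub_left (mul_le_mul_of_nonneg_left (hx t ht).2 hβ.le) α
    · exact sub_le_sub_left (mul_le_mul_of_nonneg_left (hx t ht).1 hβ.le) α
  have hVpos : 0 < V := pos_of_mul_pos_right (hDpos.trans_le hbounds.2) (exp_pos _).le
  set L := log (D / V)
  have hL : L ∈ Icc (α - β * xhi) (α - β * xlo) :=
    ⟨(le_log_iff_exp_le (div_pos hDpos hVpos)).2 ((le_div_iff₀ hVpos).2 hbounds.1),
      (log_le_iff_le_exp (div_pos hDpos hVpos)).2 ((div_le_iff₀ hVpos).2 hbounds.2)⟩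
  have hrevenue : β * ∫ t in Icc (0 : ℝ) 1, x t * d t ≤ (α - L) * D := by
    have := mul_integral_mul_le_of_eq_exp_mul hd hv hxd (hIcc hd0) (hIcc hv0) (hIcc hdeq)
      (hD ▸ hDpos) (hV ▸ hVpos)
    rwa [← hD, ← hV] at this
  have hprice : α / β - 1 / β * L = (α - L) / β := by ring
  rw [hprice]
  refine ⟨⟨?_, ?_⟩, ?_, ?_⟩
  · rw [le_div_iff₀ hβ]; linarith [hL.2]
  · rw [div_le_iff₀ hβ]; linarith [hL.1]
  · rw [mul_div_cancel₀ _ hβ.ne', sub_sub_cancel, exp_log (div_pos hDpos hVpos),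
      div_mul_cancel₀ _ hVpos.ne']
  · rw [div_mul_eq_mul_div, le_div_iff₀ hβ, mul_comm]
    exact hrevenue

/-- Single-product core of constant-price optimality (Theorem 2): if on `[0,1]` the
instantaneous demand is `d(t) = exp(α - β x(t))·v(t)` with `v(t) > 0`, `d(t) ≥ 0`, a
measurable price path `x(t) ∈ [x̲, x̄]`, `β > 0`, and `D = ∫ d > 0`, `V = ∫ v`, then the
constant price `x* = α/β - (1/β)·ln(D/V)` satisfies `x* ∈ [x̲, x̄]`,
`D = exp(α - β x*)·V`, and `∫ x(t) d(t) dt ≤ x*·D`. -/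
theorem constant_price_optimal (α β xlo xhi : ℝ) (hβ : 0 < β) (hbox : xlo ≤ xhi)
    (d v x : ℝ → ℝ)
    (hd : IntegrableOn d (Set.Icc 0 1)) (hv : IntegrableOn v (Set.Icc 0 1))
    (hxd : IntegrableOn (fun t => x t * d t) (Set.Icc 0 1))
    (hd0 : ∀ t ∈ Set.Icc (0 : ℝ) 1, 0 ≤ d t)
    (hv0 : ∀ t ∈ Set.Icc (0 : ℝ) 1, 0 < v t)
    (hx : ∀ t ∈ Set.Icc (0 : ℝ) 1, x t ∈ Set.Icc xlo xhi)
    (hdeq : ∀ t ∈ Set.Icc (0 : ℝ) 1, d t = Real.exp (α - β * x t) * v t)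
    (D V : ℝ)
    (hD : D = ∫ t in Set.Icc (0 : ℝ) 1, d t)
    (hV : V = ∫ t in Set.Icc (0 : ℝ) 1, v t)
    (hDpos : 0 < D) :
    (α / β - (1 / β) * Real.log (D / V)) ∈ Set.Icc xlo xhi ∧
    D = Real.exp (α - β * (α / β - (1 / β) * Real.log (D / V))) * V ∧
    (∫ t in Set.Icc (0 : ℝ) 1, x t * d t) ≤
      (α / β - (1 / β) * Real.log (D / V)) * D :=
  constant_price_optimal_general α β xlo xhi hβ d v x hd hv hxd hd0 hv0 hx hdeq D V hD hV hDpos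
end
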